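/- Let X be a finite set of samples, and for a classifier let γ(x) denote the margin of sample x under model W_s and γ'(x) the margin under model W_t, where a sample is misclassified under a model iff its margin is ≤ 0. Assume every sample correctly classified under W_s has margin at least γ_min > 0 under W_s. Then the increase in error rate satisfies E(W_t) − E(W_s) ≤ (1/γ_min) · (1/|X|) ∑_{x∈X} max(0, γ(x) − γ'(x)), where E(W) is the fraction of samples with margin ≤ 0 under W. -/

import Mathlib

open Finset

/-!
A sample that is newly misclassified under the new model had margin at least `γmin` under the
old one and has margin at most `0` under the new one, so its margin dropped by at least `γmin`.
Hence `γmin` times the number of newly misclassified samples is at most the total positive margin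
drop, and the error rate can grow by at most that many samples.
-/

theorem Finset.cast_card_sub_cast_card_le_card_sdiff {α : Type*} [DecidableEq α]
    (s t : Finset α) : (#s : ℝ) - #t ≤ #(s \ t) := by
  have h : (#s : ℝ) ≤ #(s \ t) + #t := by exact_mod_cast card_le_card_sdiff_add_card
  linarith

theorem mul_card_newly_misclassified_le_sum_margin_drop {ι : Type*} [DecidableEq ι]
    (s : Finset ι) (γ γ' : ι → ℝ) (γmin : ℝ) (hcorrect : ∀ x ∈ s, 0 < γ x → γmin ≤ γ x) :
    γmin * #({x ∈ s | γ' x ≤ 0} \ {x ∈ s | γ x ≤ 0}) ≤ ∑ x ∈ s, max 0 (γ x - γ' x) := by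
  have hdrop : ∀ x ∈ {x ∈ s | γ' x ≤ 0} \ {x ∈ s | γ x ≤ 0}, γmin ≤ max 0 (γ x - γ' x) := by
    intro x hx
    simp only [mem_sdiff, mem_filter, not_and, not_le] at hx
    obtain ⟨⟨hxs, hnew⟩, hold⟩ := hx
    have := hcorrect x hxs (hold hxs)
    exact le_max_of_le_right (by linarith)
  calc γmin * #({x ∈ s | γ' x ≤ 0} \ {x ∈ s | γ x ≤ 0})
      = #({x ∈ s | γ' x ≤ 0} \ {x ∈ s | γ x ≤ 0}) • γmin := by rw [nsmul_eq_mul, mul_comm]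
    _ ≤ ∑ x ∈ {x ∈ s | γ' x ≤ 0} \ {x ∈ s | γ x ≤ 0}, max 0 (γ x - γ' x) :=
        card_nsmul_le_sum _ _ _ hdrop
    _ ≤ ∑ x ∈ s, max 0 (γ x - γ' x) :=
        sum_le_sum_of_subset_of_nonneg (sdiff_subset.trans (filter_subset _ _))
          fun _ _ _ ↦ le_max_left _ _

theorem error_increase_le_margin_drop_general {X : Type*} [Fintype X]
    (γ γ' : X → ℝ) (γmin : ℝ) (hγmin : 0 < γmin)
    (hcorrect : ∀ x : X, 0 < γ x → γmin ≤ γ x) :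
    ((Finset.univ.filter (fun x : X => γ' x ≤ 0)).card : ℝ) / (Fintype.card X : ℝ)
      - ((Finset.univ.filter (fun x : X => γ x ≤ 0)).card : ℝ) / (Fintype.card X : ℝ)
      ≤ (1 / γmin) * ((1 / (Fintype.card X : ℝ)) * ∑ x : X, max 0 (γ x - γ' x)) := by
  classical
  have hcount := mul_card_newly_misclassified_le_sum_margin_drop univ γ γ' γmin
    fun x _ ↦ hcorrect x
  set errNew := univ.filter fun x : X => γ' x ≤ 0
  set errOld := univ.filter fun x : X => γ x ≤ 0
  set drop := ∑ x : X, max 0 (γ x - γ' x)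
  calc (#errNew : ℝ) / Fintype.card X - #errOld / Fintype.card X
      ≤ #(errNew \ errOld) / Fintype.card X := by
        rw [div_sub_div_same]
        gcongr
        exact cast_card_sub_cast_card_le_card_sdiff _ _
    _ ≤ (1 / γmin) * drop / Fintype.card X := by
        gcongr
        rw [one_div_mul_eq_div, le_div_iff₀ hγmin, mul_comm]
        exact hcount
    _ = _ := by ring

/-- Margin-based forgetting bound (Lemma 1, empirical form). If every sample
correctly classified under the old model has margin at least γ_min > 0, then the
increase in error rate is bounded by the average positive margin drop divided by γ_min. -/
theorem error_increase_le_margin_drop {X : Type*} [Fintype X] [Nonempty X]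
    (γ γ' : X → ℝ) (γmin : ℝ) (hγmin : 0 < γmin)
    (hcorrect : ∀ x : X, 0 < γ x → γmin ≤ γ x) :
    ((Finset.univ.filter (fun x : X => γ' x ≤ 0)).card : ℝ) / (Fintype.card X : ℝ)
      - ((Finset.univ.filter (fun x : X => γ x ≤ 0)).card : ℝ) / (Fintype.card X : ℝ)
      ≤ (1 / γmin) * ((1 / (Fintype.card X : ℝ)) * ∑ x : X, max 0 (γ x - γ' x)) :=
  error_increase_le_margin_drop_general γ γ' γmin hγmin hcorrect
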